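/- arXiv:1808.01949 — 2 statements merged into one kernel-verified Lean document; each statement's English description precedes it below -/
import Mathlib

section
/- Let a < b be integers and let x, x' : ℤ → ℝ satisfy |x(i) - x'(i)| ≤ 1 for all i ∈ [a, b]. Define the linear interpolant ξ(t) = (t - a)·(x(b) - x(a))/(b - a) + x(a), and similarly ξ' using x'. Define L₁ = Σ_{i=a}^{b} |ξ(i) - x(i)| and L₁' = Σ_{i=a}^{b} |ξ'(i) - x'(i)|. Then |L₁' - L₁| ≤ 2(b - a). -/
/-!
Interpolating the endpoints is linear in the series, so the residuals of `x'` and `x` differ by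
the residual of `d = x' - x`; by the reverse triangle inequality the two scores differ by at most
the score of `d`. The residual of `d` vanishes at `a` and `b`, and at each of the `b - a - 1`
interior points it is at most `2`, since `|d| ≤ 1` and its chord, a convex combination of
`d a` and `d b`, is bounded by `1` too.
-/

open Finset

noncomputable section

def chord (a b : ℤ) (x : ℤ → ℝ) (t : ℤ) : ℝ :=
  (t - a) * (x b - x a) / (b - a) + x a

/-- The score `L₁^{[a,b]}` of the series `x`. -/
def l1Score (a b : ℤ) (x : ℤ → ℝ) : ℝ :=
  ∑ i ∈ Icc a b, |chord a b x i - x i|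

end

section

variable {a b t : ℤ} {x x' : ℤ → ℝ}

theorem chord_left : chord a b x a = x a := by
  simp [chord]

theorem chord_right (hab : a ≠ b) : chord a b x b = x b := by
  have : (b : ℝ) - a ≠ 0 := sub_ne_zero.mpr (by exact_mod_cast hab.symm)
  simp only [chord]
  field_simp
  ring

theorem chord_sub : chord a b (x' - x) t = chord a b x' t - chord a b x t := by
  simp only [chord, Pi.sub_apply]
  ring

theorem abs_chord_le {M : ℝ} (ht : t ∈ Icc a b) (ha : |x a| ≤ M) (hb : |x b| ≤ M) :
    |chord a b x t| ≤ M := by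
  obtain ⟨hat, htb⟩ := mem_Icc.mp ht
  have hat : (a : ℝ) ≤ t := by exact_mod_cast hat
  have htb : (t : ℝ) ≤ b := by exact_mod_cast htb
  set l : ℝ := (t - a) / (b - a)
  have hl0 : 0 ≤ l := div_nonneg (by linarith) (by linarith)
  have hl1 : l ≤ 1 := div_le_one_of_le₀ (by linarith) (by linarith)
  have hconvex : chord a b x t = (1 - l) * x a + l * x b := by
    simp only [chord, l]
    ring
  calc |chord a b x t| ≤ |(1 - l) * x a| + |l * x b| := hconvex ▸ abs_add_le _ _
    _ = (1 - l) * |x a| + l * |x b| := by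
        rw [abs_mul, abs_mul, abs_of_nonneg (sub_nonneg.mpr hl1), abs_of_nonneg hl0]
    _ ≤ (1 - l) * M + l * M := by gcongr
    _ = M := by ring

theorem abs_l1Score_sub_le : |l1Score a b x' - l1Score a b x| ≤ l1Score a b (x' - x) := by
  simp only [l1Score, ← sum_sub_distrib]
  refine (abs_sum_le_sum_abs _ _).trans (sum_le_sum fun i _ => ?_)
  calc |(|chord a b x' i - x' i| - |chord a b x i - x i|)|
      ≤ |(chord a b x' i - x' i) - (chord a b x i - x i)| := abs_abs_sub_abs_le_abs_sub _ _
    _ = |chord a b (x' - x) i - (x' - x) i| := by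
        rw [chord_sub, Pi.sub_apply]
        congr 1
        ring

theorem l1Score_eq_sum_Ioo (hab : a ≠ b) :
    l1Score a b x = ∑ i ∈ Ioo a b, |chord a b x i - x i| := by
  refine (sum_subset Ioo_subset_Icc_self fun i hi hi' => ?_).symm
  obtain rfl | rfl : i = a ∨ i = b := by
    simp only [mem_Icc, mem_Ioo] at hi hi'
    omega
  · simp [chord_left]
  · simp [chord_right hab]

theorem l1Score_le {M : ℝ} (hab : a < b) (hx : ∀ i ∈ Icc a b, |x i| ≤ M) :
    l1Score a b x ≤ 2 * M * (b - a) := by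
  have ha := hx a (left_mem_Icc.mpr hab.le)
  have hb := hx b (right_mem_Icc.mpr hab.le)
  have hterm : ∀ i ∈ Ioo a b, |chord a b x i - x i| ≤ 2 * M := fun i hi => by
    have hi := Ioo_subset_Icc_self hi
    linarith [abs_sub (chord a b x i) (x i), abs_chord_le hi ha hb, hx i hi]
  have hcard : (#(Ioo a b) : ℝ) = b - a - 1 := by exact_mod_cast Int.card_Ioo_of_lt a b hab
  rw [l1Score_eq_sum_Ioo hab.ne]
  calc ∑ i ∈ Ioo a b, |chord a b x i - x i| ≤ #(Ioo a b) * (2 * M) :=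
        (sum_le_card_nsmul _ _ _ hterm).trans_eq (nsmul_eq_mul _ _)
    _ ≤ 2 * M * (b - a) := by
        rw [hcard]
        nlinarith [(abs_nonneg _).trans ha]

end

theorem l1_score_sensitivity (a b : ℤ) (hab : a < b) (x x' : ℤ → ℝ)
    (hx : ∀ i ∈ Finset.Icc a b, |x i - x' i| ≤ 1)
    (ξ ξ' : ℤ → ℝ)
    (hξ : ∀ t, ξ t = (t - a) * (x b - x a) / (b - a) + x a)
    (hξ' : ∀ t, ξ' t = (t - a) * (x' b - x' a) / (b - a) + x' a) :
    |(∑ i ∈ Finset.Icc a b, |ξ' i - x' i|) - (∑ i ∈ Finset.Icc a b, |ξ i - x i|)| ≤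
      2 * (b - a) := by
  obtain rfl : ξ = chord a b x := funext hξ
  obtain rfl : ξ' = chord a b x' := funext hξ'
  have hdiff : ∀ i ∈ Icc a b, |(x' - x) i| ≤ 1 := fun i hi => by
    rw [Pi.sub_apply, abs_sub_comm]
    exact hx i hi
  calc |l1Score a b x' - l1Score a b x| ≤ l1Score a b (x' - x) := abs_l1Score_sub_le
    _ ≤ 2 * 1 * (b - a) := l1Score_le hab hdiff
    _ = 2 * (b - a) := by ring
end

section
/- Let Z₁, ..., Z_d be i.i.d. Laplace random variables with scale Δ/ε, and let Q : D → ℝ^d have L1-sensitivity Δ (i.e., sup_{X ~ X'} ‖Q(X) - Q(X')‖₁ ≤ Δ). Then the mechanism M(X) = Q(X) + (Z₁, ..., Z_d) is ε-differentially private: for all X ~ X' and measurable S ⊆ ℝ^d, Pr[M(X) ∈ S] ≤ exp(ε)·Pr[M(X') ∈ S]. -/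
open MeasureTheory Real

theorem multidim_laplace_mechanism_dp {D : Type*} {d : ℕ} (adj : D → D → Prop)
    (Q : D → (Fin d → ℝ)) (Δ ε : ℝ) (hΔ : 0 < Δ) (hε : 0 < ε)
    (hsens : ∀ X X' : D, adj X X' → ∑ i, |Q X i - Q X' i| ≤ Δ) :
    ∀ X X' : D, adj X X' → ∀ S : Set (Fin d → ℝ), MeasurableSet S →
      (∫ s in S, ∏ i, 1 / (2 * (Δ / ε)) * Real.exp (-|s i - Q X i| / (Δ / ε))) ≤
        Real.exp ε *
          ∫ s in S, ∏ i, 1 / (2 * (Δ / ε)) * Real.exp (-|s i - Q X' i| / (Δ / ε)) := by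
  intro X X' hadj S hS
  set b : ℝ := Δ / ε with hbdef
  have hbpos : 0 < b := div_pos hΔ hε
  -- pointwise bound (both directions via symmetry of the hypothesis)
  have pt : ∀ μ ν : Fin d → ℝ, (∑ i, |μ i - ν i|) ≤ Δ → ∀ s : Fin d → ℝ,
      (∏ i, 1 / (2 * b) * Real.exp (-|s i - μ i| / b)) ≤
        Real.exp ε * ∏ i, 1 / (2 * b) * Real.exp (-|s i - ν i| / b) := by
    intro μ ν h s
    rw [Finset.prod_mul_distrib, Finset.prod_mul_distrib, ← Real.exp_sum, ← Real.exp_sum,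
      mul_comm (Real.exp ε), mul_assoc]
    refine mul_le_mul_of_nonneg_left ?_ (Finset.prod_nonneg fun i _ => by positivity)
    rw [← Real.exp_add, Real.exp_le_exp]
    have hsum : (∑ i, -|s i - μ i| / b) - (∑ i, -|s i - ν i| / b) ≤ ε := by
      rw [← Finset.sum_sub_distrib]
      have h1 : ∀ i ∈ Finset.univ, -|s i - μ i| / b - -|s i - ν i| / b ≤ |μ i - ν i| / b := by
        intro i _
        rw [div_sub_div_same, div_le_div_iff_of_pos_right hbpos]
        have := abs_sub_abs_le_abs_sub (s i - ν i) (s i - μ i)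
        have h2 : |s i - ν i - (s i - μ i)| = |μ i - ν i| := by
          rw [show s i - ν i - (s i - μ i) = μ i - ν i by ring]
        linarith
      calc (∑ i, (-|s i - μ i| / b - -|s i - ν i| / b)) ≤ ∑ i, |μ i - ν i| / b :=
            Finset.sum_le_sum h1
        _ = (∑ i, |μ i - ν i|) / b := by rw [Finset.sum_div]
        _ ≤ Δ / b := by gcongr
        _ = ε := by rw [hbdef]; field_simp
    linarith
  have hbound : ∑ i, |Q X i - Q X' i| ≤ Δ := hsens X X' hadj
  have hbound' : ∑ i, |Q X' i - Q X i| ≤ Δ := by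
    simpa [abs_sub_comm] using hbound
  have hcont : ∀ μ : Fin d → ℝ,
      Continuous fun s : Fin d → ℝ => ∏ i, 1 / (2 * b) * Real.exp (-|s i - μ i| / b) := by
    intro μ; fun_prop
  have hnn : ∀ (μ : Fin d → ℝ) (s : Fin d → ℝ),
      0 ≤ ∏ i, 1 / (2 * b) * Real.exp (-|s i - μ i| / b) :=
    fun μ s => Finset.prod_nonneg fun i _ => by positivity
  by_cases hI : IntegrableOn
      (fun s => ∏ i, 1 / (2 * b) * Real.exp (-|s i - Q X' i| / b)) S volume
  · have hI2 := hI.const_mul (Real.exp ε)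
    have hI1 : IntegrableOn
        (fun s => ∏ i, 1 / (2 * b) * Real.exp (-|s i - Q X i| / b)) S volume := by
      refine hI2.mono' ((hcont _).aestronglyMeasurable.restrict) ?_
      filter_upwards with s
      rw [Real.norm_of_nonneg (hnn _ s)]
      exact pt _ _ hbound s
    calc (∫ s in S, ∏ i, 1 / (2 * b) * Real.exp (-|s i - Q X i| / b))
        ≤ ∫ s in S, Real.exp ε * ∏ i, 1 / (2 * b) * Real.exp (-|s i - Q X' i| / b) :=
          integral_mono hI1 hI2 fun s => pt _ _ hbound s
      _ = Real.exp ε * ∫ s in S, ∏ i, 1 / (2 * b) * Real.exp (-|s i - Q X' i| / b) :=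
          integral_const_mul _ _
  · have hI1 : ¬ IntegrableOn
        (fun s => ∏ i, 1 / (2 * b) * Real.exp (-|s i - Q X i| / b)) S volume := by
      intro h
      apply hI
      refine (h.const_mul (Real.exp ε)).mono'
        ((hcont _).aestronglyMeasurable.restrict) ?_
      filter_upwards with s
      rw [Real.norm_of_nonneg (hnn _ s)]
      exact pt _ _ hbound' s
    rw [integral_undef hI1, integral_undef hI, mul_zero]
end
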